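/- With N ≥ 2 clients, H_n, ψ_n > 0, R > 0, S = Σ_l H_l/ψ_l, η = (N-1)R/S, and d_n* = η - η² H_n/(ψ_n R), each d_n* satisfies the interior first-order condition: ψ_n R · (Σ_{l≠n} d_l*) / (Σ_l d_l*)² = H_n, provided d_n* > 0 for all n. -/
import Mathlib


theorem nash_equilibrium_first_order_condition
    (N : ℕ) (hN : 2 ≤ N) (H ψ : Fin N → ℝ) (R : ℝ)
    (hH : ∀ n, 0 < H n) (hψ : ∀ n, 0 < ψ n) (hR : 0 < R)
    (S η : ℝ) (hS : S = ∑ l, H l / ψ l)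
    (hη : η = ((N : ℝ) - 1) * R / S)
    (d : Fin N → ℝ)
    (hd : ∀ n, d n = η - η ^ 2 * H n / (ψ n * R))
    (hpos : ∀ n, 0 < d n) :
    ∀ n, ψ n * R * (∑ l ∈ Finset.univ.erase n, d l) / (∑ l, d l) ^ 2 = H n := by
  have hNpos : 0 < N := by omega
  have hSpos : 0 < S := by
    rw [hS]
    apply Finset.sum_pos
    · intro i _; exact div_pos (hH i) (hψ i)
    · exact Finset.univ_nonempty_iff.2 ⟨⟨0, hNpos⟩⟩
  have hN1 : (1 : ℝ) ≤ (N : ℝ) - 1 := by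
    have : (2 : ℝ) ≤ (N : ℝ) := by exact_mod_cast hN
    linarith
  have hηpos : 0 < η := by
    rw [hη]; positivity
  have hηS : η * S / R = (N : ℝ) - 1 := by
    rw [hη]; field_simp
  have hsum : ∑ l, d l = η := by
    have : ∑ l, d l = (N : ℝ) * η - η ^ 2 / R * ∑ l, H l / ψ l := by
      simp only [hd]
      rw [Finset.sum_sub_distrib, Finset.sum_const, Finset.card_univ, Fintype.card_fin,
        Finset.mul_sum]
      congr 1
      · push_cast; ring
      · apply Finset.sum_congr rfl
        intro l _
        rw [div_mul_div_comm, mul_comm (ψ l) R]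
    rw [this, ← hS]
    have : η ^ 2 / R * S = η * ((N : ℝ) - 1) := by
      rw [← hηS]; have := hR.ne'; field_simp
    rw [this]; ring
  intro n
  have herase : ∑ l ∈ Finset.univ.erase n, d l = η ^ 2 * H n / (ψ n * R) := by
    have h1 : ∑ l ∈ Finset.univ.erase n, d l = (∑ l, d l) - d n := by
      rw [eq_sub_iff_add_eq, Finset.sum_erase_add _ _ (Finset.mem_univ n)]
    rw [h1, hsum, hd n]; ring
  rw [herase, hsum]
  have h1 := (hψ n).ne'
  have h2 := hR.ne'
  have h3 := hηpos.ne'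
  field_simp
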